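/- Let (T,[[·,·,·]]) be a Lie triple system over ℝ and (V,θ,D_θ) a representation of it. On the dual space V*, define θ'(x,y)(f) := f∘θ(y,x) and D'(x,y)(f) := -f∘D_θ(x,y) for f ∈ V*. Then (V*,θ',D') is a representation of (T,[[·,·,·]]), i.e. θ' and D' satisfy (R1), (R31), (R32), (R33). -/

import Mathlib

/-- A Lie triple system over ℝ: a real vector space with a trilinear operation
satisfying (T02), (T1) and (T2). -/
structure LieTripleSystem (T : Type*) [AddCommGroup T] [Module ℝ T] where
  tri : T →ₗ[ℝ] T →ₗ[ℝ] T →ₗ[ℝ] T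
  tri_skew : ∀ x y z : T, tri x y z = - tri y x z
  tri_cyclic : ∀ x y z : T, tri x y z + tri y z x + tri z x y = 0
  tri_leibniz : ∀ u v x y z : T,
    tri u v (tri x y z) = tri (tri u v x) y z + tri x (tri u v y) z + tri x y (tri u v z)

/-- The dual map θ'(x,y) : V* → V*, θ'(x,y)(f) = f ∘ θ(y,x). -/
def dualTheta {T V : Type*} [AddCommGroup T] [Module ℝ T] [AddCommGroup V] [Module ℝ V]
    (θ : T →ₗ[ℝ] T →ₗ[ℝ] Module.End ℝ V) (x y : T) :
    Module.End ℝ (Module.Dual ℝ V) :=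
  (θ y x).dualMap

/-- The dual map D'(x,y) : V* → V*, D'(x,y)(f) = -f ∘ D(x,y). -/
def dualD {T V : Type*} [AddCommGroup T] [Module ℝ T] [AddCommGroup V] [Module ℝ V]
    (D : T →ₗ[ℝ] T →ₗ[ℝ] Module.End ℝ V) (x y : T) :
    Module.End ℝ (Module.Dual ℝ V) :=
  - (D x y).dualMap

/-! Transposition `f ↦ f.dualMap` is linear and reverses composition, so it carries each
representation axiom of `(V, θ, D)` to the corresponding axiom of `(V*, θ', D')`. Only (R33)
needs more: its dual has `[[x,y,z]]` in the *first* argument of `θ`, and that expression of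
`θ` comes from combining (R32) with (R33). -/

namespace LinearMap

section Semiring

variable {R M N : Type*} [CommSemiring R] [AddCommMonoid M] [Module R M]
  [AddCommMonoid N] [Module R N]

@[simp]
theorem dualMap_zero : (0 : M →ₗ[R] N).dualMap = 0 :=
  map_zero Module.Dual.transpose

@[simp]
theorem dualMap_add (f g : M →ₗ[R] N) : (f + g).dualMap = f.dualMap + g.dualMap :=
  map_add Module.Dual.transpose f g

end Semiring

@[simp]
theorem dualMap_sub {R M N : Type*} [CommRing R] [AddCommGroup M] [Module R M]
    [AddCommGroup N] [Module R N] (f g : M →ₗ[R] N) :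
    (f - g).dualMap = f.dualMap - g.dualMap :=
  map_sub Module.Dual.transpose f g

end LinearMap

section DualRepresentation

open LinearMap

variable {T V : Type*} [AddCommGroup T] [Module ℝ T] [AddCommGroup V] [Module ℝ V]
  (θ D : T →ₗ[ℝ] T →ₗ[ℝ] Module.End ℝ V)

theorem theta_tri_left (L : LieTripleSystem T)
    (hR32 : ∀ u v x y : T, D u v * θ x y - θ x y * D u v =
      θ (L.tri u v x) y + θ x (L.tri u v y))
    (hR33 : ∀ u x y z : T, θ u (L.tri x y z) =
      θ y z * θ u x - θ x z * θ u y + D x y * θ u z) (x y z u : T) :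
    θ (L.tri x y z) u = θ x u * θ z y - θ y u * θ z x - θ z u * D x y := by
  have h := hR32 x y z u
  rw [hR33 z x y u] at h
  rw [eq_sub_of_add_eq h.symm]
  abel

theorem dualD_add_dualTheta_sub_dualTheta (hR1 : ∀ x y : T, D x y + θ x y - θ y x = 0)
    (x y : T) : dualD D x y + dualTheta θ x y - dualTheta θ y x = 0 := by
  calc dualD D x y + dualTheta θ x y - dualTheta θ y x
      = -(D x y + θ x y - θ y x).dualMap := by
        simp only [dualD, dualTheta, dualMap_sub, dualMap_add]
        abel
    _ = 0 := by
        rw [hR1, dualMap_zero]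
        abel

/- The products of `Module.End ℝ (Module.Dual ℝ V)` are rewritten as compositions: this type
has no `Ring` instance that instance search can find, so ring lemmas such as `neg_mul` do not
apply to it. -/
theorem dualD_mul_dualD_sub (L : LieTripleSystem T)
    (hR31 : ∀ u v x y : T, D u v * D x y - D x y * D u v =
      D (L.tri u v x) y + D x (L.tri u v y)) (u v x y : T) :
    dualD D u v * dualD D x y - dualD D x y * dualD D u v =
      dualD D (L.tri u v x) y + dualD D x (L.tri u v y) := by
  calc dualD D u v * dualD D x y - dualD D x y * dualD D u v
      = -(D u v * D x y - D x y * D u v).dualMap := by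
        simp only [dualD, Module.End.mul_eq_comp, neg_comp, comp_neg, dualMap_sub,
          dualMap_comp_dualMap]
        abel
    _ = dualD D (L.tri u v x) y + dualD D x (L.tri u v y) := by
        rw [hR31, dualMap_add]
        simp only [dualD]
        abel

theorem dualD_mul_dualTheta_sub (L : LieTripleSystem T)
    (hR32 : ∀ u v x y : T, D u v * θ x y - θ x y * D u v =
      θ (L.tri u v x) y + θ x (L.tri u v y)) (u v x y : T) :
    dualD D u v * dualTheta θ x y - dualTheta θ x y * dualD D u v =
      dualTheta θ (L.tri u v x) y + dualTheta θ x (L.tri u v y) := by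
  calc dualD D u v * dualTheta θ x y - dualTheta θ x y * dualD D u v
      = (D u v * θ y x - θ y x * D u v).dualMap := by
        simp only [dualD, dualTheta, Module.End.mul_eq_comp, neg_comp, comp_neg, dualMap_sub,
          dualMap_comp_dualMap]
        abel
    _ = dualTheta θ (L.tri u v x) y + dualTheta θ x (L.tri u v y) := by
        rw [hR32, dualMap_add, add_comm]
        rfl

theorem dualTheta_tri (L : LieTripleSystem T)
    (hR32 : ∀ u v x y : T, D u v * θ x y - θ x y * D u v =
      θ (L.tri u v x) y + θ x (L.tri u v y))
    (hR33 : ∀ u x y z : T, θ u (L.tri x y z) =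
      θ y z * θ u x - θ x z * θ u y + D x y * θ u z) (u x y z : T) :
    dualTheta θ u (L.tri x y z) =
      dualTheta θ y z * dualTheta θ u x - dualTheta θ x z * dualTheta θ u y +
        dualD D x y * dualTheta θ u z := by
  calc dualTheta θ u (L.tri x y z)
      = (θ x u * θ z y - θ y u * θ z x - θ z u * D x y).dualMap := by
        rw [dualTheta, theta_tri_left θ D L hR32 hR33]
    _ = dualTheta θ y z * dualTheta θ u x - dualTheta θ x z * dualTheta θ u y +
          dualD D x y * dualTheta θ u z := by
        simp only [dualD, dualTheta, Module.End.mul_eq_comp, neg_comp, dualMap_sub,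
          dualMap_comp_dualMap]
        abel

end DualRepresentation

/-- If (V,θ,D_θ) is a representation of a Lie triple system (T,[[·,·,·]]), then
(V*,θ',D') with θ'(x,y)(f) = f∘θ(y,x) and D'(x,y)(f) = -f∘D_θ(x,y) is again a
representation, i.e. it satisfies (R1), (R31), (R32) and (R33). -/
theorem dual_representation_of_lts
    {T V : Type*} [AddCommGroup T] [Module ℝ T] [AddCommGroup V] [Module ℝ V]
    (L : LieTripleSystem T)
    (θ D : T →ₗ[ℝ] T →ₗ[ℝ] Module.End ℝ V)
    (hR1 : ∀ x y : T, D x y + θ x y - θ y x = 0)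
    (hR31 : ∀ u v x y : T, D u v * D x y - D x y * D u v =
      D (L.tri u v x) y + D x (L.tri u v y))
    (hR32 : ∀ u v x y : T, D u v * θ x y - θ x y * D u v =
      θ (L.tri u v x) y + θ x (L.tri u v y))
    (hR33 : ∀ u x y z : T, θ u (L.tri x y z) =
      θ y z * θ u x - θ x z * θ u y + D x y * θ u z) :
    (∀ x y : T, dualD D x y + dualTheta θ x y - dualTheta θ y x = 0) ∧
    (∀ u v x y : T, dualD D u v * dualD D x y - dualD D x y * dualD D u v =
      dualD D (L.tri u v x) y + dualD D x (L.tri u v y)) ∧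
    (∀ u v x y : T, dualD D u v * dualTheta θ x y - dualTheta θ x y * dualD D u v =
      dualTheta θ (L.tri u v x) y + dualTheta θ x (L.tri u v y)) ∧
    (∀ u x y z : T, dualTheta θ u (L.tri x y z) =
      dualTheta θ y z * dualTheta θ u x - dualTheta θ x z * dualTheta θ u y +
        dualD D x y * dualTheta θ u z) :=
  ⟨dualD_add_dualTheta_sub_dualTheta θ D hR1, dualD_mul_dualD_sub D L hR31,
    dualD_mul_dualTheta_sub θ D L hR32, dualTheta_tri θ D L hR32 hR33⟩
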